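/- Let A_y ≥ A_z > 0 and λ_y, λ_z > 0 satisfy λ_y A_z ≤ λ_z A_y, with at least one of these two inequalities strict. Let K(x) = (A_y x + λ_y) ln(A_y x + λ_y) − (A_z x + λ_z) ln(A_z x + λ_z). Then there exists a unique α* ∈ [0,1] such that K'(α*) = K(1) − K(0); moreover this α* lies in the open interval (0,1). -/

import Mathlib

/-!
`K` is strictly convex on `[0, ∞)`: its second derivative is
`A_y² / (A_y x + λ_y) - A_z² / (A_z x + λ_z)`, which is positive for `x ≥ 0` because
`A_y² (A_z x + λ_z) - A_z² (A_y x + λ_y) = A_y A_z (A_y - A_z) x + (A_y² λ_z - A_z² λ_y)`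
and the degradedness conditions make the constant term positive. The mean value theorem
gives a point of `(0, 1)` where `K'` equals the slope `K 1 - K 0`, and strict monotonicity of
`K'` on `[0, 1]` makes it the only such point.
-/

open Real Set

theorem existsUnique_hasDerivAt_eq_slope_of_strictMonoOn {f f' : ℝ → ℝ} {a b : ℝ}
    (hab : a < b) (hf : ∀ x ∈ Icc a b, HasDerivAt f (f' x) x)
    (hf' : StrictMonoOn f' (Icc a b)) :
    ∃ c ∈ Ioo a b, f' c = (f b - f a) / (b - a) ∧
      ∀ d ∈ Icc a b, f' d = (f b - f a) / (b - a) → d = c := by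
  obtain ⟨c, hc, hc_slope⟩ := exists_hasDerivAt_eq_slope f f' hab
    (fun x hx => (hf x hx).continuousAt.continuousWithinAt)
    (fun x hx => hf x (Ioo_subset_Icc_self hx))
  exact ⟨c, hc, hc_slope, fun d hd hd_slope =>
    hf'.injOn hd (Ioo_subset_Icc_self hc) (hd_slope.trans hc_slope.symm)⟩

theorem hasDerivAt_affine (A l x : ℝ) : HasDerivAt (fun x => A * x + l) A x := by
  simpa using ((hasDerivAt_id x).const_mul A).add_const l

section AffineMulLog

variable {A l x : ℝ}

theorem hasDerivAt_affine_mul_log (h : A * x + l ≠ 0) :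
    HasDerivAt (fun x => (A * x + l) * log (A * x + l)) ((log (A * x + l) + 1) * A) x := by
  exact (hasDerivAt_mul_log h).comp x (hasDerivAt_affine A l x)

theorem hasDerivAt_log_affine_add_one_mul (h : A * x + l ≠ 0) :
    HasDerivAt (fun x => (log (A * x + l) + 1) * A) (A ^ 2 / (A * x + l)) x := by
  refine ((((hasDerivAt_log h).comp x (hasDerivAt_affine A l x)).add_const 1).mul_const A
    ).congr_deriv ?_
  ring

end AffineMulLog

theorem sq_mul_lt_sq_mul_of_degraded {Ay Az ly lz : ℝ} (hAz : 0 < Az) (hAyz : Az ≤ Ay)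
    (hlz : 0 < lz) (hdeg : ly * Az ≤ lz * Ay) (hstrict : Az < Ay ∨ ly * Az < lz * Ay) :
    Az ^ 2 * ly < Ay ^ 2 * lz := by
  have hAy : 0 < Ay := hAz.trans_le hAyz
  rw [show Az ^ 2 * ly = Az * (ly * Az) by ring, show Ay ^ 2 * lz = Ay * (lz * Ay) by ring]
  rcases hstrict with hA | hl
  · calc Az * (ly * Az) ≤ Az * (lz * Ay) := by gcongr
      _ < Ay * (lz * Ay) := by gcongr
  · calc Az * (ly * Az) < Az * (lz * Ay) := by gcongr
      _ ≤ Ay * (lz * Ay) := by gcongr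

theorem sq_div_affine_lt_sq_div_affine {Ay Az ly lz x : ℝ} (hAz : 0 < Az) (hAyz : Az ≤ Ay)
    (hly : 0 < ly) (hlz : 0 < lz) (hkey : Az ^ 2 * ly < Ay ^ 2 * lz) (hx : 0 ≤ x) :
    Az ^ 2 / (Az * x + lz) < Ay ^ 2 / (Ay * x + ly) := by
  have hAy : 0 < Ay := hAz.trans_le hAyz
  rw [div_lt_div_iff₀ (by positivity) (by positivity), ← sub_pos]
  calc 0 < Ay * Az * (Ay - Az) * x + (Ay ^ 2 * lz - Az ^ 2 * ly) :=
        add_pos_of_nonneg_of_pos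
          (mul_nonneg (mul_nonneg (mul_pos hAy hAz).le (sub_nonneg.mpr hAyz)) hx)
          (sub_pos.mpr hkey)
    _ = Ay ^ 2 * (Az * x + lz) - Az ^ 2 * (Ay * x + ly) := by ring

theorem strictMonoOn_log_affine_add_one_mul_sub {Ay Az ly lz : ℝ} (hAz : 0 < Az)
    (hAyz : Az ≤ Ay) (hly : 0 < ly) (hlz : 0 < lz) (hkey : Az ^ 2 * ly < Ay ^ 2 * lz) :
    StrictMonoOn (fun x => (log (Ay * x + ly) + 1) * Ay - (log (Az * x + lz) + 1) * Az)
      (Ici 0) := by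
  have hAy : 0 < Ay := hAz.trans_le hAyz
  have hderiv : ∀ x ∈ Ici (0 : ℝ), HasDerivAt
      (fun x => (log (Ay * x + ly) + 1) * Ay - (log (Az * x + lz) + 1) * Az)
      (Ay ^ 2 / (Ay * x + ly) - Az ^ 2 / (Az * x + lz)) x := fun x (hx : 0 ≤ x) =>
    (hasDerivAt_log_affine_add_one_mul (by positivity)).sub
      (hasDerivAt_log_affine_add_one_mul (by positivity))
  refine strictMonoOn_of_deriv_pos (convex_Ici 0)
    (fun x hx => (hderiv x hx).continuousAt.continuousWithinAt) fun x hx => ?_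
  rw [interior_Ici, mem_Ioi] at hx
  rw [(hderiv x hx.le).deriv, sub_pos]
  exact sq_div_affine_lt_sq_div_affine hAz hAyz hly hlz hkey hx.le

/-- Under the degradedness conditions (with at least one strict), there is a unique
`α* ∈ [0,1]` satisfying the first-order condition `K'(α*) = K(1) − K(0)`, and it
lies in the open interval `(0,1)`. -/
theorem poisson_wiretap_optimal_alpha_exists_unique
    (Ay Az ly lz : ℝ) (hAz : 0 < Az) (hAyz : Az ≤ Ay)
    (hly : 0 < ly) (hlz : 0 < lz) (hdeg : ly * Az ≤ lz * Ay)
    (hstrict : Az < Ay ∨ ly * Az < lz * Ay)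
    (K : ℝ → ℝ)
    (hK : K = fun x => (Ay * x + ly) * Real.log (Ay * x + ly)
        - (Az * x + lz) * Real.log (Az * x + lz)) :
    ∃ α ∈ Set.Ioo (0:ℝ) 1, deriv K α = K 1 - K 0 ∧
      ∀ β ∈ Set.Icc (0:ℝ) 1, deriv K β = K 1 - K 0 → β = α := by
  have hAy : 0 < Ay := hAz.trans_le hAyz
  have hK' : ∀ x ∈ Icc (0 : ℝ) 1, HasDerivAt K
      ((log (Ay * x + ly) + 1) * Ay - (log (Az * x + lz) + 1) * Az) x := by
    rintro x ⟨hx, -⟩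
    rw [hK]
    exact (hasDerivAt_affine_mul_log (by positivity)).sub
      (hasDerivAt_affine_mul_log (by positivity))
  have hmono : StrictMonoOn
      (fun x => (log (Ay * x + ly) + 1) * Ay - (log (Az * x + lz) + 1) * Az) (Icc 0 1) :=
    (strictMonoOn_log_affine_add_one_mul_sub hAz hAyz hly hlz
      (sq_mul_lt_sq_mul_of_degraded hAz hAyz hlz hdeg hstrict)).mono Icc_subset_Ici_self
  obtain ⟨α, hα, hα_slope, huniq⟩ :=
    existsUnique_hasDerivAt_eq_slope_of_strictMonoOn one_pos hK' hmono
  rw [sub_zero, div_one] at hα_slope huniq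
  exact ⟨α, hα, (hK' α (Ioo_subset_Icc_self hα)).deriv.trans hα_slope,
    fun β hβ hβ_slope => huniq β hβ ((hK' β hβ).deriv.symm.trans hβ_slope)⟩
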